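/- Let H be a real Hilbert space, Ψ : H → H a map satisfying ‖Ψ(u) − Ψ(v)‖ ≤ M‖u − v‖ for all u, v ∈ H, and let (B_j) be bounded linear operators on H with ‖B_j‖ ≤ θ and ‖I − B_j‖ ≤ b for all j, where θM < 1. Let (u_j) satisfy u_{j+1} = Ψ(u_j), let (ξ_j) be a sequence in H with ‖ξ_j‖ ≤ ε, let y_{j+1} = Ψ(u_j) + ξ_{j+1}, and let (û_j) satisfy û_{j+1} = B_j(Ψ(û_j)) + (I − B_j)(y_{j+1}). Then for all j ≥ 0, ‖û_j − u_j‖ ≤ (θM)ʲ‖û_0 − u_0‖ + bε·∑_{i=0}^{j−1} (θM)ⁱ, and consequently limsup_{j→∞} ‖û_j − u_j‖ ≤ bε/(1−θM). -/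

import Mathlib

/-!
The analysis error obeys `e_{j+1} ≤ θM e_j + bε`: the analysis step moves the error by
`B_j (Ψ û_j − Ψ u_j) + (I − B_j) ξ_{j+1}`, whose first term is shrunk by `‖B_j‖ M ≤ θM` and
whose second is at most `bε`. Unrolling this affine recursion gives the finite-time bound, and
since `θM < 1` the bound converges to `bε / (1 − θM)`, which therefore dominates the limsup.
-/

open Filter Finset

section AnalysisStep

variable {𝕜 E : Type*} [NontriviallyNormedField 𝕜] [SeminormedAddCommGroup E] [NormedSpace 𝕜 E]

theorem analysis_update_sub_forecast (B : E →L[𝕜] E) (p q ξ : E) :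
    B p + (1 - B) (q + ξ) - q = B (p - q) + (1 - B) ξ := by
  simp only [map_sub, map_add, sub_apply, one_apply_eq_self]
  abel

theorem norm_analysis_update_sub_le {Ψ : E → E} {M θ b ε : ℝ}
    (hLip : ∀ u v : E, ‖Ψ u - Ψ v‖ ≤ M * ‖u - v‖) {B : E →L[𝕜] E}
    (hB : ‖B‖ ≤ θ) (hIB : ‖1 - B‖ ≤ b) (x y : E) {ξ : E} (hξ : ‖ξ‖ ≤ ε) :
    ‖B (Ψ x) + (1 - B) (Ψ y + ξ) - Ψ y‖ ≤ θ * M * ‖x - y‖ + b * ε := by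
  rw [analysis_update_sub_forecast]
  calc ‖B (Ψ x - Ψ y) + (1 - B) ξ‖
      ≤ ‖B‖ * ‖Ψ x - Ψ y‖ + ‖1 - B‖ * ‖ξ‖ :=
        (norm_add_le _ _).trans (add_le_add (B.le_opNorm _) ((1 - B).le_opNorm _))
    _ ≤ θ * (M * ‖x - y‖) + b * ε :=
        add_le_add (mul_le_mul hB (hLip x y) (norm_nonneg _) ((norm_nonneg _).trans hB))
          (mul_le_mul hIB hξ (norm_nonneg _) ((norm_nonneg _).trans hIB))
    _ = θ * M * ‖x - y‖ + b * ε := by ring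

end AnalysisStep

section AffineRecursion

variable {a : ℕ → ℝ} {r c : ℝ}

theorem le_pow_mul_add_geom_sum_of_le_mul_add (hr : 0 ≤ r) (h : ∀ j, a (j + 1) ≤ r * a j + c)
    (j : ℕ) : a j ≤ r ^ j * a 0 + c * ∑ i ∈ range j, r ^ i := by
  induction j with
  | zero => simp
  | succ n ih =>
    calc a (n + 1) ≤ r * a n + c := h n
      _ ≤ r * (r ^ n * a 0 + c * ∑ i ∈ range n, r ^ i) + c := by gcongr
      _ = r ^ (n + 1) * a 0 + c * ∑ i ∈ range (n + 1), r ^ i := by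
        rw [geom_sum_succ]; ring

theorem tendsto_pow_mul_add_geom_sum (hr₀ : 0 ≤ r) (hr₁ : r < 1) (a₀ : ℝ) :
    Tendsto (fun j => r ^ j * a₀ + c * ∑ i ∈ range j, r ^ i) atTop (nhds (c / (1 - r))) := by
  have hpow := (tendsto_pow_atTop_nhds_zero_of_lt_one hr₀ hr₁).mul_const a₀
  have hgeom := (hasSum_geometric_of_lt_one hr₀ hr₁).tendsto_sum_nat.const_mul c
  simpa [div_eq_mul_inv] using hpow.add hgeom

theorem limsup_le_div_of_le_mul_add (ha : ∀ j, 0 ≤ a j) (hr₀ : 0 ≤ r) (hr₁ : r < 1)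
    (h : ∀ j, a (j + 1) ≤ r * a j + c) : limsup a atTop ≤ c / (1 - r) := by
  have hlim := tendsto_pow_mul_add_geom_sum (c := c) hr₀ hr₁ (a 0)
  calc limsup a atTop
      ≤ limsup (fun j => r ^ j * a 0 + c * ∑ i ∈ range j, r ^ i) atTop :=
        limsup_le_limsup (Eventually.of_forall (le_pow_mul_add_geom_sum_of_le_mul_add hr₀ h))
          (isCoboundedUnder_le_of_le atTop ha) hlim.isBoundedUnder_le
    _ = c / (1 - r) := hlim.limsup_eq

end AffineRecursion

theorem filter_accuracy_contractive_general
    {H : Type*} [NormedAddCommGroup H] [InnerProductSpace ℝ H]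
    (Ψ : H → H) (M θ b ε : ℝ)
    (hM : 0 ≤ M) (hθ : 0 ≤ θ) (hθM : θ * M < 1)
    (hLip : ∀ u v : H, ‖Ψ u - Ψ v‖ ≤ M * ‖u - v‖)
    (B : ℕ → H →L[ℝ] H)
    (hBnorm : ∀ j, ‖B j‖ ≤ θ)
    (hIBnorm : ∀ j, ‖1 - B j‖ ≤ b)
    (u : ℕ → H) (hu : ∀ j, u (j + 1) = Ψ (u j))
    (ξ : ℕ → H) (hξ : ∀ j, ‖ξ j‖ ≤ ε)
    (y : ℕ → H) (hy : ∀ j, y (j + 1) = Ψ (u j) + ξ (j + 1))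
    (uh : ℕ → H)
    (huh : ∀ j, uh (j + 1) = (B j) (Ψ (uh j)) + (1 - B j) (y (j + 1))) :
    (∀ j, ‖uh j - u j‖ ≤
      (θ * M) ^ j * ‖uh 0 - u 0‖ + b * ε * ∑ i ∈ Finset.range j, (θ * M) ^ i) ∧
    Filter.limsup (fun j => ‖uh j - u j‖) Filter.atTop ≤ b * ε / (1 - θ * M) := by
  have hθM₀ : 0 ≤ θ * M := mul_nonneg hθ hM
  have hstep : ∀ j, ‖uh (j + 1) - u (j + 1)‖ ≤ θ * M * ‖uh j - u j‖ + b * ε := fun j => by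
    rw [huh, hy, hu]
    exact norm_analysis_update_sub_le hLip (hBnorm j) (hIBnorm j) _ _ (hξ (j + 1))
  exact ⟨le_pow_mul_add_geom_sum_of_le_mul_add hθM₀ hstep,
    limsup_le_div_of_le_mul_add (fun _ => norm_nonneg _) hθM₀ hθM hstep⟩

/-- Simplified complete-observations filter accuracy result: the uniform
contraction `‖B_j‖ ≤ θ` with `θM < 1` alone controls expansion in `Ψ`:
`‖û_j − u_j‖ ≤ (θM)ʲ‖û_0 − u_0‖ + bε ∑_{i<j} (θM)ⁱ` and
`limsup ‖û_j − u_j‖ ≤ bε/(1−θM)`. -/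
theorem filter_accuracy_contractive
    {H : Type*} [NormedAddCommGroup H] [InnerProductSpace ℝ H]
    (Ψ : H → H) (M θ b ε : ℝ)
    (hM : 0 ≤ M) (hθ : 0 ≤ θ) (hb : 0 ≤ b) (hε : 0 ≤ ε) (hθM : θ * M < 1)
    (hLip : ∀ u v : H, ‖Ψ u - Ψ v‖ ≤ M * ‖u - v‖)
    (B : ℕ → H →L[ℝ] H)
    (hBnorm : ∀ j, ‖B j‖ ≤ θ)
    (hIBnorm : ∀ j, ‖1 - B j‖ ≤ b)
    (u : ℕ → H) (hu : ∀ j, u (j + 1) = Ψ (u j))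
    (ξ : ℕ → H) (hξ : ∀ j, ‖ξ j‖ ≤ ε)
    (y : ℕ → H) (hy : ∀ j, y (j + 1) = Ψ (u j) + ξ (j + 1))
    (uh : ℕ → H)
    (huh : ∀ j, uh (j + 1) = (B j) (Ψ (uh j)) + (1 - B j) (y (j + 1))) :
    (∀ j, ‖uh j - u j‖ ≤
      (θ * M) ^ j * ‖uh 0 - u 0‖ + b * ε * ∑ i ∈ Finset.range j, (θ * M) ^ i) ∧
    Filter.limsup (fun j => ‖uh j - u j‖) Filter.atTop ≤ b * ε / (1 - θ * M) :=
  filter_accuracy_contractive_general Ψ M θ b ε hM hθ hθM hLip B hBnorm hIBnorm u hu ξ hξ y hy uh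
    huh
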